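/- arXiv:1208.6401 — 2 statements merged into one kernel-verified Lean document; each statement's English description precedes it below -/
import Mathlib

section
/- Let g ∈ ℝ[x₁,…,xₙ] be homogeneous of degree d with compact sublevel set G = {x : g(x) ≤ 1}, coefficient vector g = (g_β)_{|β|=d}, and moments λ_γ = ∫_G x^γ dx. Then for every multi-index α with |α| = d: Σ_{|β|=d} g_β λ_{α+β} = ((n+d)/(n+2d)) λ_α. Equivalently, M_d(λ) g = ((n+d)/(n+2d)) λ^{(d)}, where λ^{(d)} = (λ_α)_{|α|=d}. -/
/-!
The left side is `∫_G g(x) x^α dx`. Since `g` has degree `d` and `x^α` degree `|α| = d`, the substitution `x ↦ t^(1/d) x` gives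
`∫_{g ≤ t} x^α = t^((n + d)/d) ∫_G x^α`. Writing `1 - g(x) = ∫_0^1 [g(x) ≤ t] dt` on `G` (where
`0 ≤ g ≤ 1`, compactness forcing `g ≥ 0`) and applying Fubini,
`∫_G (1 - g) x^α = ∫_0^1 t^((n + d)/d) dt · ∫_G x^α = d/(n + 2d) · ∫_G x^α`.
-/

open MeasureTheory Set Module Pointwise

theorem MvPolynomial.IsHomogeneous.eval_smul {σ R : Type*} [CommSemiring R]
    {g : MvPolynomial σ R} {d : ℕ} (hg : g.IsHomogeneous d) (c : R) (x : σ → R) :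
    eval (c • x) g = c ^ d * eval x g := by
  rw [eval_eq, eval_eq, Finset.mul_sum]
  refine Finset.sum_congr rfl fun β hβ => ?_
  simp only [Pi.smul_apply, smul_eq_mul, mul_pow, Finset.prod_mul_distrib,
    Finset.prod_pow_eq_pow_sum, ← hg.degree_eq_sum_deg_support hβ]
  ring

theorem MvPolynomial.setIntegral_eval_mul_prod_pow {ι : Type*} [Fintype ι]
    (μ : Measure (ι → ℝ)) [IsFiniteMeasureOnCompacts μ] {s : Set (ι → ℝ)} (hs : IsCompact s)
    (g : MvPolynomial ι ℝ) (α : ι →₀ ℕ) :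
    ∫ x in s, eval x g * ∏ i, x i ^ α i ∂μ =
      ∑ β ∈ g.support, coeff β g * ∫ x in s, ∏ i, x i ^ (α + β) i ∂μ := by
  have expand : ∀ x : ι → ℝ, eval x g * ∏ i, x i ^ α i =
      ∑ β ∈ g.support, coeff β g * ∏ i, x i ^ (α + β) i := by
    intro x
    simp only [eval_eq', Finset.sum_mul, Finsupp.add_apply, pow_add, Finset.prod_mul_distrib]
    exact Finset.sum_congr rfl fun β _ => by ring
  have hint : ∀ β : ι →₀ ℕ, IntegrableOn (fun x : ι → ℝ => ∏ i, x i ^ β i) s μ := fun β =>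
    ContinuousOn.integrableOn_compact hs (by fun_prop)
  simp only [expand]
  rw [integral_finsetSum _ fun β _ => (hint (α + β)).const_mul _]
  simp only [integral_const_mul]

def IsPosHomogeneous {E : Type*} [SMul ℝ E] (f : E → ℝ) (d : ℕ) : Prop :=
  ∀ c : ℝ, 0 < c → ∀ x, f (c • x) = c ^ d * f x

theorem isPosHomogeneous_prod_pow {ι : Type*} [Fintype ι] (α : ι → ℕ) :
    IsPosHomogeneous (fun x : ι → ℝ => ∏ i, x i ^ α i) (∑ i, α i) := by
  intro c _ x
  simp only [Pi.smul_apply, smul_eq_mul, mul_pow, Finset.prod_mul_distrib,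
    Finset.prod_pow_eq_pow_sum]

namespace IsPosHomogeneous

section Module

variable {E : Type*} [AddCommGroup E] [Module ℝ E] {f : E → ℝ} {d : ℕ}

theorem map_zero (hf : IsPosHomogeneous f d) (hd : d ≠ 0) : f 0 = 0 := by
  have h := hf 2 two_pos 0
  rw [smul_zero] at h
  have h2 : (1 : ℝ) < 2 ^ d := one_lt_pow₀ one_lt_two hd
  nlinarith

theorem smul_sublevel_one (hf : IsPosHomogeneous f d) {c : ℝ} (hc : 0 < c) :
    c • {x | f x ≤ 1} = {x | f x ≤ c ^ d} := by
  ext x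
  rw [mem_smul_set_iff_inv_smul_mem₀ hc.ne']
  change f (c⁻¹ • x) ≤ 1 ↔ f x ≤ c ^ d
  rw [hf _ (inv_pos.2 hc), inv_pow, inv_mul_le_iff₀ (pow_pos hc d), mul_one]

end Module

theorem nonneg_of_isBounded {E : Type*} [NormedAddCommGroup E] [NormedSpace ℝ E] {f : E → ℝ}
    {d : ℕ} (hf : IsPosHomogeneous f d) (hd : d ≠ 0) (hb : Bornology.IsBounded {x | f x ≤ 1})
    (x : E) : 0 ≤ f x := by
  by_contra! hx
  have hx0 : x ≠ 0 := by
    rintro rfl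
    exact hx.ne (hf.map_zero hd)
  obtain ⟨R, hR⟩ := hb.exists_norm_le
  have hnorm : 0 < ‖x‖ := norm_pos_iff.2 hx0
  set c := (|R| + 1) / ‖x‖
  have hc : 0 < c := by positivity
  have hmem : f (c • x) ≤ 1 := by
    rw [hf c hc]
    nlinarith [pow_pos hc d]
  have := hR _ hmem
  rw [norm_smul, Real.norm_of_nonneg hc.le, div_mul_cancel₀ _ hnorm.ne'] at this
  linarith [le_abs_self R]

end IsPosHomogeneous

theorem setIntegral_one_sub_mul_eq_integral_sublevel {α : Type*} [MeasurableSpace α]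
    {μ : Measure α} [SFinite μ] {f P : α → ℝ} (hf : Measurable f) (hf0 : ∀ x, 0 ≤ f x)
    (hP : IntegrableOn P {x | f x ≤ 1} μ) :
    ∫ x in {x | f x ≤ 1}, (1 - f x) * P x ∂μ = ∫ t in Icc 0 1, ∫ x in {x | f x ≤ t}, P x ∂μ := by
  set S := {x | f x ≤ 1}
  have hS : MeasurableSet S := measurableSet_le hf measurable_const
  have hT : MeasurableSet {p : α × ℝ | f p.1 ≤ p.2} :=
    measurableSet_le (hf.comp measurable_fst) measurable_snd
  set F : α → ℝ → ℝ := fun x t => {p : α × ℝ | f p.1 ≤ p.2}.indicator (fun p => P p.1) (x, t)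
  have hF : Integrable (Function.uncurry F) ((μ.restrict S).prod (volume.restrict (Icc 0 1))) := by
    have hPfst := hP.comp_fst (volume.restrict (Icc (0 : ℝ) 1))
    refine hPfst.norm.mono' (hPfst.aestronglyMeasurable.indicator hT) (ae_of_all _ fun p => ?_)
    exact norm_indicator_le_norm_self (fun p : α × ℝ => P p.1) p
  have inner_t : ∀ x ∈ S, ∫ t in Icc 0 1, F x t = (1 - f x) * P x := by
    intro x hx
    have hIcc : Ici (f x) ∩ Icc 0 1 = Icc (f x) 1 := by
      ext t
      exact ⟨fun h => ⟨h.1, h.2.2⟩, fun h => ⟨h.1, (hf0 x).trans h.1, h.2⟩⟩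
    change ∫ t in Icc 0 1, (Ici (f x)).indicator (fun _ => P x) t = _
    rw [integral_indicator measurableSet_Ici, Measure.restrict_restrict measurableSet_Ici,
      setIntegral_const, hIcc, Real.volume_real_Icc_of_le hx, smul_eq_mul]
  have inner_x : ∀ t ∈ Icc (0 : ℝ) 1, ∫ x in S, F x t ∂μ = ∫ x in {x | f x ≤ t}, P x ∂μ := by
    intro t ht
    have hmeas : MeasurableSet {x | f x ≤ t} := measurableSet_le hf measurable_const
    have hsub : {x | f x ≤ t} ⊆ S := fun x hx => le_trans hx ht.2
    change ∫ x in S, {x | f x ≤ t}.indicator P x ∂μ = _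
    rw [integral_indicator hmeas, Measure.restrict_restrict hmeas, inter_eq_left.2 hsub]
  calc ∫ x in S, (1 - f x) * P x ∂μ = ∫ x in S, (∫ t in Icc (0 : ℝ) 1, F x t) ∂μ :=
        (setIntegral_congr_fun hS inner_t).symm
    _ = ∫ t in Icc (0 : ℝ) 1, ∫ x in S, F x t ∂μ := integral_integral_swap hF
    _ = ∫ t in Icc (0 : ℝ) 1, ∫ x in {x | f x ≤ t}, P x ∂μ :=
        setIntegral_congr_fun measurableSet_Icc inner_x

theorem integral_Ioc_zero_one_rpow {r : ℝ} (hr : -1 < r) :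
    ∫ t in Ioc (0 : ℝ) 1, t ^ r = 1 / (r + 1) := by
  rw [← intervalIntegral.integral_of_le zero_le_one, integral_rpow (Or.inl hr),
    Real.one_rpow, Real.zero_rpow (by linarith), sub_zero]

namespace IsPosHomogeneous

variable {E : Type*} [NormedAddCommGroup E] [NormedSpace ℝ E] [MeasurableSpace E] [BorelSpace E]
  [FiniteDimensional ℝ E] (μ : Measure E) [μ.IsAddHaarMeasure] {f P : E → ℝ} {d k : ℕ}

theorem setIntegral_sublevel_pow (hf : IsPosHomogeneous f d) (hP : IsPosHomogeneous P k)
    {c : ℝ} (hc : 0 < c) :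
    ∫ x in {x | f x ≤ c ^ d}, P x ∂μ =
      c ^ (finrank ℝ E + k) * ∫ x in {x | f x ≤ 1}, P x ∂μ := by
  have h := Measure.setIntegral_comp_smul_of_pos μ P {x | f x ≤ 1} hc
  rw [hf.smul_sublevel_one hc, smul_eq_mul, eq_inv_mul_iff_mul_eq₀ (pow_ne_zero _ hc.ne')] at h
  simp only [hP c hc, integral_const_mul] at h
  rw [← h, pow_add]
  ring

theorem setIntegral_mul_sublevel (hf : IsPosHomogeneous f d) (hd : d ≠ 0)
    (hfm : Measurable f) (hf0 : ∀ x, 0 ≤ f x) (hP : IsPosHomogeneous P k)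
    (hPi : IntegrableOn P {x | f x ≤ 1} μ) :
    ∫ x in {x | f x ≤ 1}, f x * P x ∂μ =
      (finrank ℝ E + k) / (finrank ℝ E + k + d) * ∫ x in {x | f x ≤ 1}, P x ∂μ := by
  set N : ℝ := finrank ℝ E + k
  set L := ∫ x in {x | f x ≤ 1}, P x ∂μ
  have hd' : (0 : ℝ) < d := by positivity
  have sublevel : ∀ t ∈ Ioc (0 : ℝ) 1, ∫ x in {x | f x ≤ t}, P x ∂μ = t ^ (N / d) * L := by
    intro t ht
    conv_lhs => rw [← Real.rpow_inv_natCast_pow ht.1.le hd]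
    rw [hf.setIntegral_sublevel_pow μ hP (by have := ht.1; positivity), ← Real.rpow_natCast,
      ← Real.rpow_mul ht.1.le, inv_mul_eq_div]
    push_cast
    rfl
  have layers : ∫ t in Icc (0 : ℝ) 1, ∫ x in {x | f x ≤ t}, P x ∂μ = d / (N + d) * L := by
    have hexp : -1 < N / d := by
      have : 0 ≤ N / d := by positivity
      linarith
    rw [integral_Icc_eq_integral_Ioc, setIntegral_congr_fun measurableSet_Ioc sublevel,
      integral_mul_const, integral_Ioc_zero_one_rpow hexp]
    congr 1
    field_simp
  have hfP : IntegrableOn (fun x => f x * P x) {x | f x ≤ 1} μ := by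
    refine hPi.bdd_mul hfm.aestronglyMeasurable.restrict (c := 1) ?_
    filter_upwards [ae_restrict_mem (measurableSet_le hfm measurable_const)] with x hx
    rw [Real.norm_of_nonneg (hf0 x)]
    exact hx
  have split : ∫ x in {x | f x ≤ 1}, (1 - f x) * P x ∂μ =
      L - ∫ x in {x | f x ≤ 1}, f x * P x ∂μ := by
    simp only [sub_mul, one_mul]
    exact integral_sub hPi hfP
  have key := setIntegral_one_sub_mul_eq_integral_sublevel hfm hf0 hPi
  rw [split, layers] at key
  have hcoef : N / (N + d) = 1 - d / (N + d) := by
    have : N + d ≠ 0 := by positivity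
    field_simp
    ring
  rw [hcoef]
  linarith

end IsPosHomogeneous

theorem linear_system_for_coefficients_general (n d : ℕ) (hd : 0 < d)
    (g : MvPolynomial (Fin n) ℝ) (hg : g.IsHomogeneous d)
    (hK : IsCompact {x : Fin n → ℝ | MvPolynomial.eval x g ≤ 1})
    (L : (Fin n →₀ ℕ) → ℝ)
    (hL : ∀ γ : Fin n →₀ ℕ,
      L γ = ∫ x in {x : Fin n → ℝ | MvPolynomial.eval x g ≤ 1}, ∏ i, x i ^ γ i) :
    ∀ α : Fin n →₀ ℕ, (∑ i, α i) = d →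
      ∑ β ∈ g.support, MvPolynomial.coeff β g * L (α + β) =
        (((n : ℝ) + d) / ((n : ℝ) + 2 * d)) * L α := by
  intro α hα
  have hg_hom : IsPosHomogeneous (fun x => MvPolynomial.eval x g) d :=
    fun c _ x => hg.eval_smul c x
  have hα_hom : IsPosHomogeneous (fun x : Fin n → ℝ => ∏ i, x i ^ α i) d :=
    hα ▸ isPosHomogeneous_prod_pow α
  have hg_nonneg : ∀ x, 0 ≤ MvPolynomial.eval x g :=
    hg_hom.nonneg_of_isBounded hd.ne' hK.isBounded
  have hα_int : IntegrableOn (fun x : Fin n → ℝ => ∏ i, x i ^ α i)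
      {x | MvPolynomial.eval x g ≤ 1} :=
    ContinuousOn.integrableOn_compact hK (by fun_prop)
  simp only [hL, ← MvPolynomial.setIntegral_eval_mul_prod_pow volume hK]
  rw [hg_hom.setIntegral_mul_sublevel volume hd.ne'
    (MvPolynomial.continuous_eval g).measurable hg_nonneg hα_hom hα_int, Module.finrank_fin_fun]
  ring

/-- For `g` homogeneous of degree `d` with compact sublevel set `G = {g ≤ 1}` and
moments `L γ = ∫_G x^γ dx`, for every multi-index `α` with `|α| = d`:
`Σ_{β} g_β L(α+β) = ((n+d)/(n+2d)) L α`. -/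
theorem linear_system_for_coefficients (n d : ℕ) (hn : 0 < n) (hd : 0 < d)
    (g : MvPolynomial (Fin n) ℝ) (hg : g.IsHomogeneous d)
    (hK : IsCompact {x : Fin n → ℝ | MvPolynomial.eval x g ≤ 1})
    (L : (Fin n →₀ ℕ) → ℝ)
    (hL : ∀ γ : Fin n →₀ ℕ,
      L γ = ∫ x in {x : Fin n → ℝ | MvPolynomial.eval x g ≤ 1}, ∏ i, x i ^ γ i) :
    ∀ α : Fin n →₀ ℕ, (∑ i, α i) = d →
      ∑ β ∈ g.support, MvPolynomial.coeff β g * L (α + β) =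
        (((n : ℝ) + d) / ((n : ℝ) + 2 * d)) * L α :=
  linear_system_for_coefficients_general n d hd g hg hK L hL
end

section
/- Let g ∈ ℝ[x₁,…,xₙ] be homogeneous of degree d with compact sublevel set G = {x : g(x) ≤ 1}. Then the coefficient vector g of g is uniquely determined by the moments of the Lebesgue measure on G of orders d and 2d, via g = ((n+d)/(n+2d)) M_d(λ)⁻¹ λ^{(d)}, where M_d(λ)[α,β] = ∫_G x^{α+β} dx (|α| = |β| = d) and λ^{(d)}_α = ∫_G x^α dx (|α| = d). -/
/-!
Since `g` is homogeneous of degree `d`, `{g ≤ t} = t ^ (1/d) • G`, so for a monomial `x^α` of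
degree `k` the scaling of Lebesgue measure gives `∫_{g ≤ t} x^α = t ^ ((n+k)/d) ∫_G x^α`.
On `G` we have `0 ≤ g ≤ 1` (a negative value of `g` would put a whole ray into the compact `G`),
so writing `g(x) = ∫_0^1 [t < g(x)] dt` and exchanging the integrals,
`∫_G x^α g = ∫_0^1 (1 - t ^ ((n+k)/d)) dt · ∫_G x^α = (n+k)/(n+k+d) · ∫_G x^α`.
For `|α| = d`, expanding `g = ∑_β g_β x^β` turns this into `M_d(λ) g = (n+d)/(n+2d) λ^(d)`.

`M_d(λ)` is the Gram matrix of the degree-`d` monomials in `L²(G)`. A combination of them that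
vanishes a.e. on `G` vanishes on the open neighbourhood `{g < 1}` of `0` by continuity, hence
everywhere by homogeneity, so its coefficients are zero and `M_d(λ)` is invertible.
-/

open MeasureTheory Matrix Set Filter Topology Pointwise

namespace MvPolynomial.IsHomogeneous

variable {σ R : Type*} [CommSemiring R] {d : ℕ} {g : MvPolynomial σ R}

theorem eval_smul_s9 (hg : g.IsHomogeneous d) (c : R) (x : σ → R) :
    eval (c • x) g = c ^ d * eval x g := by
  simp only [eval_eq, Finset.mul_sum]
  refine Finset.sum_congr rfl fun s hs => ?_
  have hdeg : ∑ i ∈ s.support, s i = d := by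
    rw [← Finsupp.degree_apply, Finsupp.degree_eq_weight_one]
    exact hg (mem_support_iff.1 hs)
  simp only [Pi.smul_apply, smul_eq_mul, mul_pow, Finset.prod_mul_distrib,
    Finset.prod_pow_eq_pow_sum, hdeg]
  ring

theorem eval_zero (hd : 0 < d) (hg : g.IsHomogeneous d) : eval 0 g = 0 := by
  simpa [zero_pow hd.ne'] using hg.eval_smul_s9 0 0

variable {ι : Type*} {g : MvPolynomial ι ℝ}

theorem eval_nonneg_of_isBounded [Fintype ι] (hd : 0 < d) (hg : g.IsHomogeneous d)
    (hG : Bornology.IsBounded {x | eval x g ≤ 1}) (x : ι → ℝ) : 0 ≤ eval x g := by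
  by_contra! hx
  have hx0 : x ≠ 0 := by rintro rfl; exact hx.ne (hg.eval_zero hd)
  have hray : ∀ c : ℝ, 0 ≤ c → eval (c • x) g ≤ 1 := fun c hc => by
    rw [hg.eval_smul_s9]
    nlinarith [pow_nonneg hc d]
  obtain ⟨r, hr⟩ := hG.exists_norm_le
  obtain ⟨c, hc⟩ := exists_nat_gt (r / ‖x‖)
  have := hr _ (hray c c.cast_nonneg)
  rw [norm_smul, Real.norm_natCast] at this
  rw [div_lt_iff₀ (norm_pos_iff.2 hx0)] at hc
  linarith

theorem sublevel_pow_eq_smul (hg : g.IsHomogeneous d) {s : ℝ} (hs : 0 < s) :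
    {x | eval x g ≤ s ^ d} = s • {x | eval x g ≤ 1} := by
  ext x
  rw [mem_smul_set_iff_inv_smul_mem₀ hs.ne']
  simp only [mem_ofPred_eq, hg.eval_smul_s9, inv_pow]
  rw [inv_mul_le_iff₀ (pow_pos hs d), mul_one]

end MvPolynomial.IsHomogeneous

section Scaling

variable {E : Type*} [NormedAddCommGroup E] [NormedSpace ℝ E] [MeasurableSpace E] [BorelSpace E]
  [FiniteDimensional ℝ E] (μ : Measure E) [μ.IsAddHaarMeasure]

theorem setIntegral_smul_set_of_homogeneous {f : E → ℝ} {k : ℕ}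
    (hf : ∀ (c : ℝ) x, f (c • x) = c ^ k * f x) (S : Set E) {s : ℝ} (hs : 0 < s) :
    ∫ x in s • S, f x ∂μ = s ^ (Module.finrank ℝ E + k) * ∫ x in S, f x ∂μ := by
  have h := Measure.setIntegral_comp_smul_of_pos μ f S hs
  simp only [hf, integral_const_mul, smul_eq_mul] at h
  rw [eq_inv_mul_iff_mul_eq₀ (pow_ne_zero _ hs.ne')] at h
  rw [← h, pow_add, mul_assoc]

end Scaling

theorem prod_smul_pow {ι : Type*} [Fintype ι] (a : ι → ℕ) (c : ℝ) (x : ι → ℝ) :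
    ∏ i, (c • x) i ^ a i = c ^ (∑ i, a i) * ∏ i, x i ^ a i := by
  simp only [Pi.smul_apply, smul_eq_mul, mul_pow, Finset.prod_mul_distrib,
    Finset.prod_pow_eq_pow_sum]

theorem eq_zero_of_homogeneous_of_eventually_nhds_zero {E : Type*} [AddCommGroup E] [Module ℝ E]
    [TopologicalSpace E] [ContinuousSMul ℝ E] {f : E → ℝ} {k : ℕ}
    (hf : ∀ (c : ℝ) x, f (c • x) = c ^ k * f x) (h0 : ∀ᶠ x in 𝓝 0, f x = 0) :
    f = 0 := by
  funext x
  have hcont : Continuous fun c : ℝ => c • x := continuous_id.smul continuous_const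
  have hlim : Tendsto (fun c : ℝ => c • x) (𝓝[>] 0) (𝓝 0) := by
    simpa using (hcont.tendsto 0).mono_left nhdsWithin_le_nhds
  obtain ⟨c, hcx, hc⟩ := ((hlim.eventually h0).and self_mem_nhdsWithin).exists
  rw [hf] at hcx
  exact (mul_eq_zero.1 hcx).resolve_left (pow_ne_zero _ (ne_of_gt hc))

namespace MvPolynomial.IsHomogeneous

variable {ι : Type*} [Fintype ι] {d : ℕ} {g : MvPolynomial ι ℝ}

theorem setIntegral_sublevel_eq_rpow_mul (hd : 0 < d) (hg : g.IsHomogeneous d)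
    {f : (ι → ℝ) → ℝ} {k : ℕ} (hf : ∀ (c : ℝ) x, f (c • x) = c ^ k * f x)
    {t : ℝ} (ht : 0 < t) :
    ∫ x in {x | eval x g ≤ t}, f x
      = t ^ (((Fintype.card ι : ℝ) + k) / d) * ∫ x in {x | eval x g ≤ 1}, f x := by
  have hdR : (d : ℝ) ≠ 0 := by positivity
  set s := t ^ (1 / (d : ℝ))
  have hs : 0 < s := by positivity
  have hsd : s ^ d = t := by
    rw [← Real.rpow_natCast, ← Real.rpow_mul ht.le, one_div_mul_cancel hdR, Real.rpow_one]
  conv_lhs => rw [← hsd, hg.sublevel_pow_eq_smul hs,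
    setIntegral_smul_set_of_homogeneous _ hf _ hs, Module.finrank_fintype_fun_eq_card]
  rw [← Real.rpow_natCast, ← Real.rpow_mul ht.le]
  congr 2
  push_cast
  ring

end MvPolynomial.IsHomogeneous

theorem integral_mul_eq_intervalIntegral_setIntegral {X : Type*} [MeasurableSpace X]
    {μ : Measure X} [SFinite μ] {f u : X → ℝ} (hf : Integrable f μ) (hu : Measurable u)
    (hu01 : ∀ᵐ x ∂μ, u x ∈ Icc 0 1) :
    ∫ x, f x * u x ∂μ = ∫ t in (0 : ℝ)..1, ∫ x in {x | t < u x}, f x ∂μ := by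
  -- `u x = vol {t ∈ (0, 1] | t < u x}`; integrate `f x` over `{(x, t) | t < u x}` in both orders
  set ν : Measure ℝ := volume.restrict (Ioc 0 1)
  set S : Set (X × ℝ) := {p | p.2 < u p.1}
  have hS : MeasurableSet S := measurableSet_lt measurable_snd (hu.comp measurable_fst)
  have hF : Integrable (S.indicator fun p => f p.1) (μ.prod ν) :=
    (hf.comp_fst ν).indicator hS
  have hsection_t : ∀ x, u x ∈ Icc 0 1 →
      ∫ t, S.indicator (fun p => f p.1) (x, t) ∂ν = f x * u x := by
    intro x hx
    have : (fun t => S.indicator (fun p => f p.1) (x, t)) = (Iio (u x)).indicator fun _ => f x := by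
      ext t; simp [S, indicator_apply]
    have hinter : Iio (u x) ∩ Ioc 0 1 = Ioo 0 (u x) := by
      ext t
      simp only [mem_inter_iff, mem_Iio, mem_Ioc, mem_Ioo]
      exact ⟨fun h => ⟨h.2.1, h.1⟩, fun h => ⟨h.2, h.1, by linarith [hx.2]⟩⟩
    rw [this, integral_indicator_const _ measurableSet_Iio,
      measureReal_restrict_apply measurableSet_Iio, hinter, Real.volume_real_Ioo_of_le hx.1,
      smul_eq_mul, sub_zero, mul_comm]
  have hsection_x : ∀ t,
      ∫ x, S.indicator (fun p => f p.1) (x, t) ∂μ = ∫ x in {x | t < u x}, f x ∂μ := by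
    intro t
    rw [← integral_indicator (measurableSet_lt measurable_const hu)]
    rfl
  rw [intervalIntegral.integral_of_le zero_le_one]
  calc ∫ x, f x * u x ∂μ = ∫ x, ∫ t, S.indicator (fun p => f p.1) (x, t) ∂ν ∂μ :=
        integral_congr_ae (hu01.mono fun x hx => (hsection_t x hx).symm)
    _ = ∫ t, ∫ x, S.indicator (fun p => f p.1) (x, t) ∂μ ∂ν := integral_integral_swap hF
    _ = _ := by simp_rw [hsection_x]; rfl

theorem integral_one_sub_rpow {p : ℝ} (hp : -1 < p) :
    ∫ t in (0 : ℝ)..1, (1 - t ^ p) = p / (p + 1) := by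
  have hp1 : p + 1 ≠ 0 := by linarith
  rw [intervalIntegral.integral_sub intervalIntegrable_const
    (intervalIntegral.intervalIntegrable_rpow' hp), integral_one, integral_rpow (Or.inl hp),
    Real.one_rpow, Real.zero_rpow hp1]
  field_simp
  ring

namespace MvPolynomial.IsHomogeneous

variable {ι : Type*} [Fintype ι] {d : ℕ} {g : MvPolynomial ι ℝ}

theorem setIntegral_mul_eval_sublevel (hd : 0 < d) (hg : g.IsHomogeneous d)
    (hG : IsCompact {x | eval x g ≤ 1}) {f : (ι → ℝ) → ℝ} (hf : Continuous f) {k : ℕ}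
    (hfk : ∀ (c : ℝ) x, f (c • x) = c ^ k * f x) :
    ∫ x in {x | eval x g ≤ 1}, f x * eval x g
      = ((Fintype.card ι : ℝ) + k) / ((Fintype.card ι : ℝ) + k + d)
          * ∫ x in {x | eval x g ≤ 1}, f x := by
  set G := {x | eval x g ≤ 1}
  set p : ℝ := ((Fintype.card ι : ℝ) + k) / d
  have hgm : Measurable fun x => eval x g := (continuous_eval g).measurable
  have hGm : MeasurableSet G := measurableSet_le hgm measurable_const
  have hfG : IntegrableOn f G := hf.continuousOn.integrableOn_compact hG
  have hgG : ∀ᵐ x ∂volume.restrict G, eval x g ∈ Icc 0 1 :=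
    (ae_restrict_iff' hGm).2 (ae_of_all _ fun x hx =>
      ⟨hg.eval_nonneg_of_isBounded hd hG.isBounded x, hx⟩)
  have hlayer : ∀ t ∈ Ioc (0 : ℝ) 1,
      ∫ x in {x | t < eval x g}, f x ∂volume.restrict G = (1 - t ^ p) * ∫ x in G, f x := by
    intro t ht
    have hsub : {x | eval x g ≤ t} ⊆ G := fun x hx => le_trans hx ht.2
    have hdiff : {x | t < eval x g} ∩ G = G \ {x | eval x g ≤ t} := by
      ext x
      simp only [mem_inter_iff, Set.mem_sdiff, mem_ofPred_eq, not_le]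
      exact and_comm
    rw [Measure.restrict_restrict (measurableSet_lt measurable_const hgm), hdiff,
      setIntegral_sdiff (measurableSet_le hgm measurable_const) hfG hsub,
      hg.setIntegral_sublevel_eq_rpow_mul hd hfk ht.1]
    ring
  have hp : 0 ≤ p := by positivity
  calc ∫ x in G, f x * eval x g
      = ∫ t in (0 : ℝ)..1, ∫ x in {x | t < eval x g}, f x ∂volume.restrict G :=
        integral_mul_eq_intervalIntegral_setIntegral hfG hgm hgG
    _ = ∫ t in (0 : ℝ)..1, (1 - t ^ p) * ∫ x in G, f x :=
        intervalIntegral.integral_congr_ae (ae_of_all _ fun t ht =>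
          hlayer t (uIoc_of_le (zero_le_one' ℝ) ▸ ht))
    _ = p / (p + 1) * ∫ x in G, f x := by
        rw [intervalIntegral.integral_mul_const, integral_one_sub_rpow (by linarith)]
    _ = _ := by
        have : (d : ℝ) ≠ 0 := by positivity
        congr 1
        simp only [p]
        field_simp

end MvPolynomial.IsHomogeneous

theorem Matrix.isUnit_of_integral_mul_of_ae_independent {X ι : Type*} [MeasurableSpace X]
    [Fintype ι] [DecidableEq ι] {μ : Measure X} {m : ι → X → ℝ}
    (hm : ∀ i j, Integrable (fun x => m i x * m j x) μ)
    (hind : ∀ v : ι → ℝ, (fun x => ∑ i, v i * m i x) =ᵐ[μ] 0 → v = 0) :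
    IsUnit (Matrix.of fun i j => ∫ x, m i x * m j x ∂μ) := by
  set M := Matrix.of fun i j => ∫ x, m i x * m j x ∂μ
  rw [isUnit_iff_isUnit_det, isUnit_iff_ne_zero, Ne, ← exists_mulVec_eq_zero_iff]
  rintro ⟨v, hv0, hv⟩
  refine hv0 (hind v ?_)
  have hsq : ∀ x, (∑ i, v i * m i x) ^ 2 = ∑ i, ∑ j, v i * v j * (m i x * m j x) :=
      fun x => by
    rw [sq, Finset.sum_mul_sum]
    exact Finset.sum_congr rfl fun i _ => Finset.sum_congr rfl fun j _ => by ring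
  have hint : Integrable (fun x => (∑ i, v i * m i x) ^ 2) μ := by
    simp_rw [hsq]
    exact integrable_finsetSum _ fun i _ => integrable_finsetSum _ fun j _ => (hm i j).const_mul _
  have hquad : ∫ x, (∑ i, v i * m i x) ^ 2 ∂μ = v ⬝ᵥ (M *ᵥ v) := by
    simp_rw [hsq]
    rw [integral_finsetSum _ fun i _ => integrable_finsetSum _ fun j _ => (hm i j).const_mul _]
    simp_rw [integral_finsetSum _ fun j _ => (hm _ j).const_mul _, integral_const_mul]
    simp only [dotProduct, mulVec, M, of_apply, Finset.mul_sum]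
    exact Finset.sum_congr rfl fun i _ => Finset.sum_congr rfl fun j _ => by ring
  have hae : (fun x => (∑ i, v i * m i x) ^ 2) =ᵐ[μ] 0 :=
    (integral_eq_zero_iff_of_nonneg (fun x => sq_nonneg _) hint).1
      (by rw [hquad, hv, dotProduct_zero])
  exact hae.mono fun x hx => pow_eq_zero_iff two_ne_zero |>.1 hx

abbrev DegExp (ι : Type*) [Fintype ι] (d : ℕ) :=
  {a : ι → Fin (d + 1) // ∑ i, (a i : ℕ) = d}

namespace DegExp

variable {ι : Type*} [Fintype ι] {d : ℕ}

noncomputable def toFinsupp (β : DegExp ι d) : ι →₀ ℕ :=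
  Finsupp.equivFunOnFinite.symm fun i => (β.1 i : ℕ)

@[simp]
theorem toFinsupp_apply (β : DegExp ι d) (i : ι) : β.toFinsupp i = β.1 i := rfl

theorem toFinsupp_injective : Function.Injective (toFinsupp (ι := ι) (d := d)) := fun β γ h =>
  Subtype.ext <| funext fun i => Fin.ext <| by simpa using DFunLike.congr_fun h i

theorem exists_toFinsupp_eq {σ : ι →₀ ℕ} (hσ : σ.degree = d) :
    ∃ β : DegExp ι d, β.toFinsupp = σ := by
  have hsum : ∑ i, σ i = d := by rwa [← Finsupp.degree_eq_sum]
  have hle : ∀ i, σ i < d + 1 := fun i => Nat.lt_succ_of_le <|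
    hsum ▸ Finset.single_le_sum (fun j _ => Nat.zero_le (σ j)) (Finset.mem_univ i)
  exact ⟨⟨fun i => ⟨σ i, hle i⟩, hsum⟩, Finsupp.ext fun i => rfl⟩

theorem eval_monomial (β : DegExp ι d) (c : ℝ) (x : ι → ℝ) :
    MvPolynomial.eval x (MvPolynomial.monomial β.toFinsupp c)
      = c * ∏ i, x i ^ (β.1 i : ℕ) := by
  rw [MvPolynomial.eval_monomial, Finsupp.prod_fintype _ _ fun i => pow_zero _]
  rfl

theorem eq_zero_of_forall_sum_mul_prod_eq_zero [DecidableEq ι] {v : DegExp ι d → ℝ}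
    (h : ∀ x : ι → ℝ, ∑ β, v β * ∏ i, x i ^ (β.1 i : ℕ) = 0) : v = 0 := by
  set q := ∑ β, MvPolynomial.monomial β.toFinsupp (v β)
  have hq : q = 0 := MvPolynomial.funext fun x => by simp [q, eval_monomial, h]
  funext β
  simpa [q, MvPolynomial.coeff_sum, MvPolynomial.coeff_monomial, toFinsupp_injective.eq_iff]
    using congr_arg (MvPolynomial.coeff β.toFinsupp) hq

end DegExp

section Moments

variable {ι : Type*} [Fintype ι] (d : ℕ)

noncomputable def momentMatrix (G : Set (ι → ℝ)) : Matrix (DegExp ι d) (DegExp ι d) ℝ :=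
  Matrix.of fun α β => ∫ x in G, ∏ i, x i ^ ((α.1 i : ℕ) + (β.1 i : ℕ))

noncomputable def momentVector (G : Set (ι → ℝ)) : DegExp ι d → ℝ :=
  fun α => ∫ x in G, ∏ i, x i ^ (α.1 i : ℕ)

noncomputable def coeffVector (g : MvPolynomial ι ℝ) : DegExp ι d → ℝ :=
  fun β => MvPolynomial.coeff β.toFinsupp g

end Moments

namespace MvPolynomial.IsHomogeneous

variable {ι : Type*} [Fintype ι] [DecidableEq ι] {d : ℕ} {g : MvPolynomial ι ℝ}

theorem eval_eq_sum_degExp (hg : g.IsHomogeneous d) (x : ι → ℝ) :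
    eval x g = ∑ β : DegExp ι d, coeff β.toFinsupp g * ∏ i, x i ^ (β.1 i : ℕ) := by
  have hsupp : g.support ⊆ Finset.univ.image DegExp.toFinsupp := fun σ hσ => by
    have hdeg : σ.degree = d := by
      rw [Finsupp.degree_eq_weight_one]
      exact hg (mem_support_iff.1 hσ)
    obtain ⟨β, hβ⟩ := DegExp.exists_toFinsupp_eq hdeg
    exact Finset.mem_image.2 ⟨β, Finset.mem_univ β, hβ⟩
  rw [eval_eq', Finset.sum_subset hsupp fun σ _ hσ => by rw [notMem_support_iff.1 hσ, zero_mul],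
    Finset.sum_image fun β _ γ _ h => DegExp.toFinsupp_injective h]
  rfl

theorem setIntegral_prod_pow_mul_eval (hg : g.IsHomogeneous d) {S : Set (ι → ℝ)}
    (hS : IsCompact S) (a : ι → ℕ) :
    ∫ x in S, (∏ i, x i ^ a i) * eval x g
      = ∑ β : DegExp ι d, (∫ x in S, ∏ i, x i ^ (a i + β.1 i)) * coeff β.toFinsupp g := by
  have hint : ∀ b : ι → ℕ, IntegrableOn (fun x : ι → ℝ => ∏ i, x i ^ b i) S :=
    fun b => (Continuous.continuousOn (by fun_prop)).integrableOn_compact hS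
  have hexpand : ∀ x : ι → ℝ, (∏ i, x i ^ a i) * eval x g
      = ∑ β : DegExp ι d, (∏ i, x i ^ (a i + β.1 i)) * coeff β.toFinsupp g := fun x => by
    rw [hg.eval_eq_sum_degExp, Finset.mul_sum]
    refine Finset.sum_congr rfl fun β _ => ?_
    simp only [pow_add, Finset.prod_mul_distrib]
    ring
  simp_rw [hexpand]
  rw [integral_finsetSum _ fun β _ => (hint _).mul_const _]
  simp_rw [integral_mul_const]

theorem isUnit_momentMatrix (hd : 0 < d) (hg : g.IsHomogeneous d)
    (hG : IsCompact {x | eval x g ≤ 1}) : IsUnit (momentMatrix d {x | eval x g ≤ 1}) := by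
  simp_rw [momentMatrix, pow_add, Finset.prod_mul_distrib]
  refine Matrix.isUnit_of_integral_mul_of_ae_independent (fun α β =>
    (Continuous.continuousOn (by fun_prop)).integrableOn_compact hG) fun v hv => ?_
  set p : (ι → ℝ) → ℝ := fun x => ∑ β, v β * ∏ i, x i ^ (β.1 i : ℕ)
  have hp : Continuous p := by fun_prop
  have hphom : ∀ (c : ℝ) x, p (c • x) = c ^ d * p x := fun c x => by
    simp only [p, prod_smul_pow, Finset.mul_sum]
    exact Finset.sum_congr rfl fun β _ => by rw [β.2]; ring
  set U := {x | eval x g < 1}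
  have hU : IsOpen U := isOpen_lt (continuous_eval g) continuous_const
  have hUG : U ⊆ {x | eval x g ≤ 1} := fun x (hx : eval x g < 1) => hx.le
  have hpU : EqOn p 0 U := Measure.eqOn_open_of_ae_eq
    (ae_restrict_of_ae_restrict_of_subset hUG hv) hU hp.continuousOn continuousOn_const
  have h0U : (0 : ι → ℝ) ∈ U := by
    show eval 0 g < 1
    rw [hg.eval_zero hd]
    exact one_pos
  have hp0 : p = 0 := eq_zero_of_homogeneous_of_eventually_nhds_zero hphom
    (Filter.mem_of_superset (hU.mem_nhds h0U) hpU)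
  exact DegExp.eq_zero_of_forall_sum_mul_prod_eq_zero (congrFun hp0)

theorem momentMatrix_mulVec_coeffVector (hd : 0 < d) (hg : g.IsHomogeneous d)
    (hG : IsCompact {x | eval x g ≤ 1}) :
    momentMatrix d {x | eval x g ≤ 1} *ᵥ coeffVector d g
      = (((Fintype.card ι : ℝ) + d) / ((Fintype.card ι : ℝ) + 2 * d))
          • momentVector d {x | eval x g ≤ 1} := by
  funext α
  have hmoment := hg.setIntegral_mul_eval_sublevel hd hG
    (f := fun x => ∏ i, x i ^ (α.1 i : ℕ)) (by fun_prop) fun c x => prod_smul_pow _ c x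
  rw [α.2, add_assoc, ← two_mul] at hmoment
  simp only [mulVec, dotProduct, momentMatrix, momentVector, coeffVector, of_apply,
    Pi.smul_apply, smul_eq_mul]
  rw [← hg.setIntegral_prod_pow_mul_eval hG, hmoment]

theorem coeffVector_eq_smul_inv_mulVec (hd : 0 < d) (hg : g.IsHomogeneous d)
    (hG : IsCompact {x | eval x g ≤ 1}) :
    coeffVector d g = (((Fintype.card ι : ℝ) + d) / ((Fintype.card ι : ℝ) + 2 * d))
      • ((momentMatrix d {x | eval x g ≤ 1})⁻¹
          *ᵥ momentVector d {x | eval x g ≤ 1}) := by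
  have hdet := (isUnit_iff_isUnit_det _).1 (hg.isUnit_momentMatrix hd hG)
  rw [← mulVec_smul, ← hg.momentMatrix_mulVec_coeffVector hd hG, mulVec_mulVec,
    nonsing_inv_mul _ hdet, one_mulVec]

end MvPolynomial.IsHomogeneous

theorem recover_coefficients_general (n d : ℕ) (hd : 0 < d)
    (g : MvPolynomial (Fin n) ℝ) (hg : g.IsHomogeneous d)
    (hK : IsCompact {x : Fin n → ℝ | MvPolynomial.eval x g ≤ 1}) :
    (fun β : {a : Fin n → Fin (d + 1) // ∑ i, (a i : ℕ) = d} =>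
        MvPolynomial.coeff (Finsupp.equivFunOnFinite.symm fun i => (β.1 i : ℕ)) g) =
      (((n : ℝ) + d) / ((n : ℝ) + 2 * d)) •
        ((Matrix.of (fun α β : {a : Fin n → Fin (d + 1) // ∑ i, (a i : ℕ) = d} =>
            ∫ x in {x : Fin n → ℝ | MvPolynomial.eval x g ≤ 1},
              ∏ i, x i ^ ((α.1 i : ℕ) + (β.1 i : ℕ))))⁻¹ *ᵥ
          fun α : {a : Fin n → Fin (d + 1) // ∑ i, (a i : ℕ) = d} =>
            ∫ x in {x : Fin n → ℝ | MvPolynomial.eval x g ≤ 1},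
              ∏ i, x i ^ (α.1 i : ℕ)) := by
  have h := hg.coeffVector_eq_smul_inv_mulVec hd hK
  rw [Fintype.card_fin] at h
  exact h

/-- Main theorem: the coefficient vector of a homogeneous polynomial `g` of degree `d`
with compact sublevel set `G = {g ≤ 1}` is recovered from the moments of order `d` and
`2d` of the Lebesgue measure on `G` via `g = ((n+d)/(n+2d)) M_d(λ)⁻¹ λ^{(d)}`. -/
theorem recover_coefficients (n d : ℕ) (hn : 0 < n) (hd : 0 < d)
    (g : MvPolynomial (Fin n) ℝ) (hg : g.IsHomogeneous d)
    (hK : IsCompact {x : Fin n → ℝ | MvPolynomial.eval x g ≤ 1}) :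
    (fun β : {a : Fin n → Fin (d + 1) // ∑ i, (a i : ℕ) = d} =>
        MvPolynomial.coeff (Finsupp.equivFunOnFinite.symm fun i => (β.1 i : ℕ)) g) =
      (((n : ℝ) + d) / ((n : ℝ) + 2 * d)) •
        ((Matrix.of (fun α β : {a : Fin n → Fin (d + 1) // ∑ i, (a i : ℕ) = d} =>
            ∫ x in {x : Fin n → ℝ | MvPolynomial.eval x g ≤ 1},
              ∏ i, x i ^ ((α.1 i : ℕ) + (β.1 i : ℕ))))⁻¹ *ᵥ
          fun α : {a : Fin n → Fin (d + 1) // ∑ i, (a i : ℕ) = d} =>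
            ∫ x in {x : Fin n → ℝ | MvPolynomial.eval x g ≤ 1},
              ∏ i, x i ^ (α.1 i : ℕ)) :=
  recover_coefficients_general n d hd g hg hK
end
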